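/- Let k ≥ 1, n ≥ 2k, Σ_k the set of k-sparse vectors of ℝⁿ, w a weight vector with w_i > 0 and max_i w_i = 1, R = ‖·‖_w, and H₀ a set of k indices carrying k largest weights of w. If ‖w_{H₀}‖₁ < ‖w_{H₀ᶜ}‖₁, then D_Σ(R) = sup_{z ∈ T_R(Σ_k)∖{0}} ‖z_{Tᶜ}‖_Σ²/‖z_T‖₂² = sup{ ‖z_{Tᶜ}‖_Σ²/‖z_T‖₂² : z ∈ ℝⁿ, z ≠ 0, ‖z_{H₀}‖_w = ‖z_{H₀ᶜ}‖_w }. -/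

import Mathlib

open scoped BigOperators ENNReal RealInnerProductSpace
open MeasureTheory Metric

noncomputable section

/-- The set of `k`-sparse vectors of `ℝⁿ`. -/
def sparseVecs (n k : ℕ) : Set (EuclideanSpace ℝ (Fin n)) :=
  {x | ∃ s : Finset (Fin n), s.card ≤ k ∧ ∀ i ∉ s, x i = 0}

/-- Descent set (collection of descent vectors) of `R` at `x`. -/
def descentCone {n : ℕ} (R : EuclideanSpace ℝ (Fin n) → ℝ) (x : EuclideanSpace ℝ (Fin n)) :
    Set (EuclideanSpace ℝ (Fin n)) := {z | R (x + z) ≤ R x}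

/-- Descent vectors of `R` at the model set `S`. -/
def descentConeSet {n : ℕ} (R : EuclideanSpace ℝ (Fin n) → ℝ)
    (S : Set (EuclideanSpace ℝ (Fin n))) : Set (EuclideanSpace ℝ (Fin n)) :=
  ⋃ x ∈ S, descentCone R x

/-- Weighted ℓ¹-norm `‖z‖_w = ∑ i, w i * |z i|`. -/
def wNorm {n : ℕ} (w : Fin n → ℝ) (z : EuclideanSpace ℝ (Fin n)) : ℝ := ∑ i, w i * |z i|

/-- Restriction of a vector to a set of coordinates (`z_S`). -/
def coordRestrict {n : ℕ} (z : EuclideanSpace ℝ (Fin n)) (S : Finset (Fin n)) :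
    EuclideanSpace ℝ (Fin n) := WithLp.toLp 2 (fun i => if i ∈ S then z i else 0)

/-- Atomic norm `‖·‖_Σ` generated by the `k`-sparse unit vectors. -/
def atomNormSigma (n k : ℕ) (z : EuclideanSpace ℝ (Fin n)) : ℝ :=
  gauge (convexHull ℝ {u : EuclideanSpace ℝ (Fin n) | u ∈ sparseVecs n k ∧ ‖u‖ = 1}) z

/-!
A descent direction `z` of `‖·‖_w` at a `k`-sparse point carries at least half of its `w`-mass on
some `k`-set `S`. Permuting the coordinates so that `S` lands on `H₀` keeps this property, because
`H₀` carries the largest weights, and does not change `‖z_{Tᶜ}‖_Σ² / ‖z_T‖₂²`, which only depends on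
the absolute values `|zᵢ|` up to permutation (`‖·‖_Σ` is invariant under signed permutations and,
being convex, monotone in each `|zᵢ|`). Now slide `|z|` linearly towards the constant vector at
level `m = min_{i ∈ T} |zᵢ|`: the head `z_T` shrinks and the tail `z_{Tᶜ}` grows, so the ratio does
not decrease, and since `‖w_{H₀}‖₁ < ‖w_{H₀ᶜ}‖₁` the mass on `H₀` falls below the mass on `H₀ᶜ`
on the way, so some point of the segment is balanced. Conversely, a balanced `z` is a descent
direction at the `k`-sparse point `-z_{H₀}`.
-/

open Finset

section Rearrangement

variable {ι : Type*}

theorem Finset.exists_perm_interchange [DecidableEq ι] {B C : Finset ι} (hBC : Disjoint B C)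
    (hcard : B.card = C.card) :
    ∃ τ : Equiv.Perm ι, (∀ i ∈ B, τ i ∈ C) ∧ (∀ i ∈ C, τ i ∈ B) ∧
      ∀ i, i ∉ B → i ∉ C → τ i = i := by
  induction B using Finset.induction_on generalizing C with
  | empty =>
    obtain rfl : C = ∅ := card_eq_zero.mp (by rw [← hcard, card_empty])
    exact ⟨1, by simp, by simp, fun _ _ _ => rfl⟩
  | @insert b B hb ih =>
    obtain ⟨hbC, hBC⟩ := disjoint_insert_left.mp hBC
    obtain ⟨c, hc⟩ : C.Nonempty := card_pos.mp (hcard ▸ card_pos.mpr (insert_nonempty b B))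
    have hcB : c ∉ B := disjoint_right.mp hBC hc
    obtain ⟨τ, hBτ, hCτ, hτ⟩ :=
      ih (C := C.erase c) (disjoint_of_subset_right (erase_subset c C) hBC)
        (by rw [card_erase_of_mem hc, ← hcard, card_insert_of_notMem hb, Nat.add_sub_cancel])
    have hτb : τ b = b := hτ b hb fun h => hbC (mem_of_mem_erase h)
    have hτc : τ c = c := hτ c hcB (notMem_erase c C)
    refine ⟨τ.trans (Equiv.swap b c), fun i hi => ?_, fun i hi => ?_, fun i hi hiC => ?_⟩
    · rcases mem_insert.mp hi with rfl | hi
      · simpa [hτb] using hc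
      · obtain ⟨hne, hmem⟩ := mem_erase.mp (hBτ i hi)
        rwa [Equiv.trans_apply, Equiv.swap_apply_of_ne_of_ne (fun h => hbC (by rwa [← h])) hne]
    · by_cases hic : i = c
      · subst hic; simp [hτc]
      · have hmem := hCτ i (mem_erase.mpr ⟨hic, hi⟩)
        rw [Equiv.trans_apply, Equiv.swap_apply_of_ne_of_ne (fun h => hb (by rwa [← h]))
          (fun h => hcB (by rwa [← h]))]
        exact mem_insert_of_mem hmem
    · have hib : i ≠ b := fun h => hi (h ▸ mem_insert_self b B)
      have hic : i ≠ c := fun h => hiC (h ▸ hc)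
      rw [Equiv.trans_apply, hτ i (fun h => hi (mem_insert_of_mem h))
        (fun h => hiC (mem_of_mem_erase h)), Equiv.swap_apply_of_ne_of_ne hib hic]

theorem Finset.exists_perm_sdiff_interchange [DecidableEq ι] {s t : Finset ι}
    (hcard : s.card = t.card) :
    ∃ τ : Equiv.Perm ι, (∀ i ∈ s \ t, τ i ∈ t \ s) ∧ (∀ i ∈ t \ s, τ i ∈ s \ t) ∧
      (∀ i, i ∉ s \ t → i ∉ t \ s → τ i = i) ∧ ∀ i, τ i ∈ t ↔ i ∈ s := by
  obtain ⟨τ, hst, hts, hτ⟩ := exists_perm_interchange disjoint_sdiff_sdiff (card_sdiff_comm hcard)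
  refine ⟨τ, hst, hts, hτ, fun i => ?_⟩
  by_cases h₁ : i ∈ s \ t
  · simp only [(mem_sdiff.mp (hst i h₁)).1, (mem_sdiff.mp h₁).1]
  by_cases h₂ : i ∈ t \ s
  · simp only [(mem_sdiff.mp (hts i h₂)).2, (mem_sdiff.mp h₂).2]
  rw [hτ i h₁ h₂]
  simp only [mem_sdiff, not_and, not_not] at h₁ h₂
  tauto

def IsTopK (k : ℕ) (y : ι → ℝ) (K : Finset ι) : Prop :=
  K.card = k ∧ ∀ i ∈ K, ∀ j ∉ K, |y j| ≤ |y i|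

theorem IsTopK.exists_perm_abs_eq [DecidableEq ι] {k : ℕ} {y : ι → ℝ} {U K : Finset ι} (hU : IsTopK k y U)
    (hK : IsTopK k y K) : ∃ τ : Equiv.Perm ι, (∀ i, τ i ∈ U ↔ i ∈ K) ∧ ∀ i, |y (τ i)| = |y i| := by
  obtain ⟨τ, hKU, hUK, hτ, hmem⟩ := exists_perm_sdiff_interchange (hK.1.trans hU.1.symm)
  have hsame : ∀ a ∈ K \ U, ∀ b ∈ U \ K, |y a| = |y b| := fun a ha b hb =>
    le_antisymm (hU.2 b (mem_sdiff.mp hb).1 a (mem_sdiff.mp ha).2)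
      (hK.2 a (mem_sdiff.mp ha).1 b (mem_sdiff.mp hb).2)
  refine ⟨τ, hmem, fun i => ?_⟩
  by_cases h₁ : i ∈ K \ U
  · exact (hsame i h₁ _ (hKU i h₁)).symm
  by_cases h₂ : i ∈ U \ K
  · exact hsame _ (hUK i h₂) i h₂
  rw [hτ i h₁ h₂]

theorem IsTopK.of_abs_comp_perm {k : ℕ} {x y : ι → ℝ} {K : Finset ι} (hK : IsTopK k x K)
    (π : Equiv.Perm ι) (hπ : ∀ i, |x (π i)| = |y i|) :
    IsTopK k y (K.map π.symm.toEmbedding) := by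
  refine ⟨by rw [card_map, hK.1], fun i hi j hj => ?_⟩
  simp only [mem_map_equiv, Equiv.symm_symm] at hi hj
  rw [← hπ i, ← hπ j]
  exact hK.2 _ hi _ hj

theorem exists_perm_weighted_sum_le [Fintype ι] [DecidableEq ι] (w a : ι → ℝ) (ha : ∀ i, 0 ≤ a i)
    {H S : Finset ι} (hH : ∀ i ∈ H, ∀ j ∉ H, w j ≤ w i) (hcard : S.card = H.card)
    (hS : ∑ i ∈ Sᶜ, w i * a i ≤ ∑ i ∈ S, w i * a i) :
    ∃ τ : Equiv.Perm ι, ∑ i ∈ Hᶜ, w i * a (τ i) ≤ ∑ i ∈ H, w i * a (τ i) := by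
  obtain ⟨τ, hHS, hSH, hτ, hmem⟩ := exists_perm_sdiff_interchange hcard.symm
  have hin : ∀ i ∈ H, w (τ i) ≤ w i := fun i hi => by
    by_cases h₁ : i ∈ H \ S
    · exact hH i hi _ (mem_sdiff.mp (hHS i h₁)).2
    · rw [hτ i h₁ fun h => (mem_sdiff.mp h).2 hi]
  have hout : ∀ i ∈ Hᶜ, w i ≤ w (τ i) := fun i hi => by
    rw [mem_compl] at hi
    by_cases h₂ : i ∈ S \ H
    · exact hH _ (mem_sdiff.mp (hSH i h₂)).1 i hi
    · rw [hτ i (fun h => hi (mem_sdiff.mp h).1) h₂]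
  refine ⟨τ, ?_⟩
  calc ∑ i ∈ Hᶜ, w i * a (τ i)
      ≤ ∑ i ∈ Hᶜ, w (τ i) * a (τ i) :=
        sum_le_sum fun i hi => mul_le_mul_of_nonneg_right (hout i hi) (ha _)
    _ = ∑ j ∈ Sᶜ, w j * a j := sum_equiv τ (fun i => by simp [hmem]) fun _ _ => rfl
    _ ≤ ∑ j ∈ S, w j * a j := hS
    _ = ∑ i ∈ H, w (τ i) * a (τ i) := (sum_equiv τ (fun i => (hmem i).symm) fun _ _ => rfl).symm
    _ ≤ ∑ i ∈ H, w i * a (τ i) :=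
        sum_le_sum fun i hi => mul_le_mul_of_nonneg_right (hin i hi) (ha _)

end Rearrangement

open scoped Pointwise

section AtomicNorm

variable {n k : ℕ}

theorem gauge_apply_le_of_mapsTo {E F : Type*} [AddCommGroup E] [Module ℝ E] [AddCommGroup F]
    [Module ℝ F] {s : Set E} {t : Set F} (hs : Absorbent ℝ s) (f : E →ₗ[ℝ] F)
    (hf : Set.MapsTo f s t) (x : E) : gauge t (f x) ≤ gauge s x := by
  refine le_of_forall_gt fun a ha => ?_
  obtain ⟨b, hb, hba, y, hy, rfl⟩ := exists_lt_of_gauge_lt hs ha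
  exact (gauge_le_of_mem hb.le ⟨f y, hf hy, (map_smul f b y).symm⟩).trans_lt hba

def sparseAtoms (n k : ℕ) : Set (EuclideanSpace ℝ (Fin n)) :=
  {u | u ∈ sparseVecs n k ∧ ‖u‖ = 1}

theorem atomNormSigma_eq_gauge (x : EuclideanSpace ℝ (Fin n)) :
    atomNormSigma n k x = gauge (convexHull ℝ (sparseAtoms n k)) x := rfl

theorem single_mem_sparseAtoms (hk : 1 ≤ k) (i : Fin n) {c : ℝ} (hc : |c| = 1) :
    EuclideanSpace.single i c ∈ sparseAtoms n k :=
  ⟨⟨{i}, by simpa using hk, fun j hj => by simp_all⟩,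
    by rw [PiLp.norm_single, Real.norm_eq_abs, hc]⟩

theorem zero_mem_convexHull_sparseAtoms (hk : 1 ≤ k) (hn : 0 < n) :
    (0 : EuclideanSpace ℝ (Fin n)) ∈ convexHull ℝ (sparseAtoms n k) := by
  have hmem : ∀ c : ℝ, |c| = 1 →
      EuclideanSpace.single ⟨0, hn⟩ c ∈ convexHull ℝ (sparseAtoms n k) :=
    fun c hc => subset_convexHull ℝ _ (single_mem_sparseAtoms hk _ hc)
  convert convex_convexHull ℝ _ (hmem 1 (by simp)) (hmem (-1) (by simp))
    (by norm_num : (0 : ℝ) ≤ 1 / 2) (by norm_num : (0 : ℝ) ≤ 1 / 2) (by norm_num) using 1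
  ext j
  by_cases hj : j = ⟨0, hn⟩ <;> simp [hj]

theorem mem_sum_abs_smul_convexHull_sparseAtoms (hk : 1 ≤ k) (hn : 0 < n)
    (x : EuclideanSpace ℝ (Fin n)) :
    x ∈ (∑ i, |x i|) • convexHull ℝ (sparseAtoms n k) := by
  set c := ∑ i, |x i|
  rcases (show 0 ≤ c by positivity).eq_or_lt with hc | hc
  · obtain rfl : x = 0 := by
      ext i
      simpa using (sum_eq_zero_iff_of_nonneg fun i _ => abs_nonneg (x i)).mp hc.symm i (mem_univ i)
    rw [← hc, Set.zero_smul_set ⟨0, zero_mem_convexHull_sparseAtoms hk hn⟩]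
    rfl
  -- `c⁻¹ • x` is a convex combination of the signed unit vectors `± eᵢ`
  set p : Fin n → EuclideanSpace ℝ (Fin n) :=
    fun i => EuclideanSpace.single i (if 0 ≤ x i then 1 else -1)
  have hp : ∀ i, |x i| • p i = EuclideanSpace.single i (x i) := fun i => by
    ext j
    by_cases hx : 0 ≤ x i
    · simp [p, hx, abs_of_nonneg, PiLp.single_apply]
    · by_cases hji : j = i <;> simp [p, hx, abs_of_neg (not_le.mp hx), hji]
  refine ⟨∑ i, (|x i| / c) • p i, (convex_convexHull ℝ _).sum_mem (fun i _ => by positivity)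
    (by rw [← sum_div, div_self hc.ne']) fun i _ => subset_convexHull ℝ _ ?_, ?_⟩
  · exact single_mem_sparseAtoms hk i (by split_ifs <;> simp)
  · simp_rw [smul_sum, smul_smul, mul_div_cancel₀ _ hc.ne', hp]
    ext j
    simp

theorem absorbent_convexHull_sparseAtoms (hk : 1 ≤ k) (hn : 0 < n) :
    Absorbent ℝ (convexHull ℝ (sparseAtoms n k)) := by
  have hstar := (convex_convexHull ℝ (sparseAtoms n k)).starConvex
    (zero_mem_convexHull_sparseAtoms hk hn)
  have hopen : IsOpen {x : EuclideanSpace ℝ (Fin n) | ∑ i, |x i| < 1} :=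
    isOpen_lt (by fun_prop) continuous_const
  refine absorbent_nhds_zero (Filter.mem_of_superset (hopen.mem_nhds (by simp))
    fun x (hx : ∑ i, |x i| < 1) => ?_)
  obtain ⟨y, hy, hxy⟩ := mem_sum_abs_smul_convexHull_sparseAtoms hk hn x
  rw [← hxy]
  exact hstar.smul_mem hy (by positivity) hx.le

theorem atomNormSigma_le_sum_abs (hk : 1 ≤ k) (hn : 0 < n) (x : EuclideanSpace ℝ (Fin n)) :
    atomNormSigma n k x ≤ ∑ i, |x i| :=
  gauge_le_of_mem (by positivity) (mem_sum_abs_smul_convexHull_sparseAtoms hk hn x)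

theorem atomNormSigma_map_le (hk : 1 ≤ k) (hn : 0 < n)
    (f : EuclideanSpace ℝ (Fin n) →ₗᵢ[ℝ] EuclideanSpace ℝ (Fin n))
    (hf : ∀ u ∈ sparseVecs n k, f u ∈ sparseVecs n k) (x : EuclideanSpace ℝ (Fin n)) :
    atomNormSigma n k (f x) ≤ atomNormSigma n k x := by
  refine gauge_apply_le_of_mapsTo (absorbent_convexHull_sparseAtoms hk hn) f.toLinearMap
    (Set.mapsTo_iff_image_subset.mpr ?_) x
  rw [LinearMap.image_convexHull]
  exact convexHull_mono (Set.image_subset_iff.mpr fun u hu => ⟨hf u hu.1, by simpa using hu.2⟩)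

theorem atomNormSigma_le_of_abs_le_of_eq_off (hk : 1 ≤ k) (hn : 0 < n)
    {x y : EuclideanSpace ℝ (Fin n)} (j : Fin n) (hxy : ∀ i ≠ j, x i = y i)
    (hj : |x j| ≤ |y j|) : atomNormSigma n k x ≤ atomNormSigma n k y := by
  set ρ := LinearIsometryEquiv.piLpCongrRight 2
    (Function.update (fun _ => LinearIsometryEquiv.refl ℝ ℝ) j (LinearIsometryEquiv.neg ℝ))
  have hρ : ∀ v : EuclideanSpace ℝ (Fin n), ∀ i, ρ v i = if i = j then -v i else v i :=
    fun v i => by by_cases h : i = j <;> simp [ρ, h, Function.update]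
  -- `x` lies on the segment between `y` and its reflection in the `j`-th coordinate
  obtain ⟨a, b, ha, hb, hab, hxj⟩ : x j ∈ segment ℝ (y j) (-y j) := by
    rw [segment_eq_uIcc, Set.mem_uIcc]
    rcases le_total 0 (y j) with h | h
    · rw [abs_of_nonneg h] at hj
      exact Or.inr (abs_le.mp hj)
    · rw [abs_of_nonpos h, abs_le] at hj
      exact Or.inl ⟨by linarith, hj.2⟩
  have hx : x = a • y + b • ρ y := by
    ext i
    by_cases h : i = j
    · subst h; simp [hρ, ← hxj]
    · simp [hρ, h, hxy i h, ← add_mul, hab]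
  have hρle : atomNormSigma n k (ρ y) ≤ atomNormSigma n k y :=
    atomNormSigma_map_le hk hn ρ.toLinearIsometry (fun u ⟨s, hs, hu⟩ =>
      ⟨s, hs, fun i hi => by simp [hρ, hu i hi]⟩) y
  calc atomNormSigma n k x
      ≤ atomNormSigma n k (a • y) + atomNormSigma n k (b • ρ y) :=
        hx ▸ gauge_add_le (convex_convexHull ℝ _) (absorbent_convexHull_sparseAtoms hk hn) _ _
    _ = a * atomNormSigma n k y + b * atomNormSigma n k (ρ y) := by
        simp only [atomNormSigma_eq_gauge, gauge_smul_of_nonneg ha, gauge_smul_of_nonneg hb,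
          smul_eq_mul]
    _ ≤ a * atomNormSigma n k y + b * atomNormSigma n k y := by gcongr
    _ = atomNormSigma n k y := by rw [← add_mul, hab, one_mul]

theorem atomNormSigma_mono (hk : 1 ≤ k) (hn : 0 < n) {x y : EuclideanSpace ℝ (Fin n)}
    (h : ∀ i, |x i| ≤ |y i|) : atomNormSigma n k x ≤ atomNormSigma n k y := by
  suffices key : ∀ t : Finset (Fin n),
      atomNormSigma n k (WithLp.toLp 2 fun i => if i ∈ t then x i else y i) ≤ atomNormSigma n k y by
    simpa using key univ
  intro t
  induction t using Finset.induction_on with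
  | empty => simp
  | @insert j t hj ih =>
    refine (atomNormSigma_le_of_abs_le_of_eq_off hk hn j (fun i hi => ?_) ?_).trans ih
    · simp [hi]
    · simpa [hj] using h j

theorem atomNormSigma_le_of_abs_comp_le (hk : 1 ≤ k) (hn : 0 < n)
    {x y : EuclideanSpace ℝ (Fin n)} (σ : Equiv.Perm (Fin n)) (h : ∀ i, |x (σ i)| ≤ |y i|) :
    atomNormSigma n k x ≤ atomNormSigma n k y := by
  set P := LinearIsometryEquiv.piLpCongrLeft 2 ℝ ℝ σ
  have hP : ∀ u ∈ sparseVecs n k, P u ∈ sparseVecs n k := fun u ⟨s, hs, hu⟩ =>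
    ⟨s.map σ.toEmbedding, (card_map _).trans_le hs, fun i hi => by
      simpa [P] using hu _ (by simpa [mem_map_equiv] using hi)⟩
  calc atomNormSigma n k x = atomNormSigma n k (P (P.symm x)) := by rw [P.apply_symm_apply]
    _ ≤ atomNormSigma n k (P.symm x) := atomNormSigma_map_le hk hn P.toLinearIsometry hP _
    _ ≤ atomNormSigma n k y := atomNormSigma_mono hk hn fun i => by simpa [P] using h i

theorem atomNormSigma_eq_of_abs_comp_eq (hk : 1 ≤ k) (hn : 0 < n)
    {x y : EuclideanSpace ℝ (Fin n)} (σ : Equiv.Perm (Fin n)) (h : ∀ i, |x (σ i)| = |y i|) :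
    atomNormSigma n k x = atomNormSigma n k y :=
  le_antisymm (atomNormSigma_le_of_abs_comp_le hk hn σ fun i => (h i).le)
    (atomNormSigma_le_of_abs_comp_le hk hn σ.symm fun i => by rw [← h, σ.apply_symm_apply])

end AtomicNorm

section TailRatio

variable {n k : ℕ}

@[simp]
theorem coordRestrict_apply (z : EuclideanSpace ℝ (Fin n)) (S : Finset (Fin n)) (i : Fin n) :
    coordRestrict z S i = if i ∈ S then z i else 0 := rfl

theorem norm_coordRestrict_sq (z : EuclideanSpace ℝ (Fin n)) (S : Finset (Fin n)) :
    ‖coordRestrict z S‖ ^ 2 = ∑ i ∈ S, z i ^ 2 := by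
  simp [EuclideanSpace.norm_sq_eq, apply_ite (· ^ 2), sum_ite_mem]

theorem wNorm_coordRestrict (w : Fin n → ℝ) (z : EuclideanSpace ℝ (Fin n)) (S : Finset (Fin n)) :
    wNorm w (coordRestrict z S) = ∑ i ∈ S, w i * |z i| := by
  simp [wNorm, apply_ite, sum_ite_mem]

def tailRatio (n k : ℕ) (K : Finset (Fin n)) (z : EuclideanSpace ℝ (Fin n)) : ℝ :=
  atomNormSigma n k (coordRestrict z Kᶜ) ^ 2 / ‖coordRestrict z K‖ ^ 2

theorem tailRatio_nonneg (K : Finset (Fin n)) (z : EuclideanSpace ℝ (Fin n)) :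
    0 ≤ tailRatio n k K z := by
  unfold tailRatio; positivity

theorem tailRatio_eq_of_abs_comp_eq (hk : 1 ≤ k) (hn : 0 < n) {x y : EuclideanSpace ℝ (Fin n)}
    {K K' : Finset (Fin n)} (σ : Equiv.Perm (Fin n)) (hσ : ∀ i, |x (σ i)| = |y i|)
    (hK : ∀ i, σ i ∈ K ↔ i ∈ K') : tailRatio n k K x = tailRatio n k K' y := by
  have htail : ∀ i, |coordRestrict x Kᶜ (σ i)| = |coordRestrict y K'ᶜ i| := fun i => by
    simp only [coordRestrict_apply, mem_compl, hK]
    split_ifs <;> simp [hσ]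
  have hhead : ∑ i ∈ K', y i ^ 2 = ∑ i ∈ K, x i ^ 2 :=
    sum_equiv σ (fun i => (hK i).symm) fun i _ => by rw [← sq_abs, ← hσ, sq_abs]
  unfold tailRatio
  rw [atomNormSigma_eq_of_abs_comp_eq hk hn σ htail, norm_coordRestrict_sq, norm_coordRestrict_sq,
    hhead]

theorem tailRatio_eq_of_isTopK (hk : 1 ≤ k) (hn : 0 < n) {x y : EuclideanSpace ℝ (Fin n)}
    {K K' : Finset (Fin n)} (hK : IsTopK k x K) (hK' : IsTopK k y K') (π : Equiv.Perm (Fin n))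
    (hπ : ∀ i, |x (π i)| = |y i|) : tailRatio n k K x = tailRatio n k K' y := by
  obtain ⟨τ, hτK, hτ⟩ := (hK.of_abs_comp_perm π hπ).exists_perm_abs_eq hK'
  refine tailRatio_eq_of_abs_comp_eq hk hn (τ.trans π) (fun i => ?_) fun i => ?_
  · rw [Equiv.trans_apply, hπ, hτ]
  · simpa [mem_map_equiv] using hτK i

theorem tailRatio_le_tailRatio (hk : 1 ≤ k) (hn : 0 < n) {x y : EuclideanSpace ℝ (Fin n)}
    {K : Finset (Fin n)} (hhead : ∀ i ∈ K, |y i| ≤ |x i|) (htail : ∀ i ∉ K, |x i| ≤ |y i|)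
    (hy : ∃ i ∈ K, y i ≠ 0) : tailRatio n k K x ≤ tailRatio n k K y := by
  obtain ⟨i₀, hi₀, hy₀⟩ := hy
  have hden : 0 < ∑ i ∈ K, y i ^ 2 :=
    sum_pos' (fun i _ => sq_nonneg _) ⟨i₀, hi₀, by positivity⟩
  unfold tailRatio
  rw [norm_coordRestrict_sq, norm_coordRestrict_sq]
  refine div_le_div₀ (sq_nonneg _) ?_ hden (sum_le_sum fun i hi => sq_le_sq.mpr (hhead i hi))
  refine pow_le_pow_left₀ (gauge_nonneg _) (atomNormSigma_mono hk hn fun i => ?_) 2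
  by_cases hi : i ∈ K <;> simp [hi, htail]

theorem tailRatio_le_of_squeeze (hk : 1 ≤ k) (hn : 0 < n) {y z : EuclideanSpace ℝ (Fin n)}
    {K : Finset (Fin n)} {m : ℝ} (hm : 0 < m) (hK : K.Nonempty) (hy : ∀ i, 0 ≤ y i)
    (hhead : ∀ i ∈ K, m ≤ z i ∧ z i ≤ y i) (htail : ∀ i ∉ K, y i ≤ z i ∧ z i ≤ m) :
    tailRatio n k K y ≤ tailRatio n k K z := by
  have hz : ∀ i, 0 ≤ z i := fun i => by
    by_cases hi : i ∈ K
    · exact hm.le.trans (hhead i hi).1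
    · exact (hy i).trans (htail i hi).1
  obtain ⟨i₀, hi₀⟩ := hK
  refine tailRatio_le_tailRatio hk hn (fun i hi => ?_) (fun i hi => ?_)
    ⟨i₀, hi₀, (hm.trans_le (hhead i₀ hi₀).1).ne'⟩
  · rw [abs_of_nonneg (hy i), abs_of_nonneg (hz i)]
    exact (hhead i hi).2
  · rw [abs_of_nonneg (hy i), abs_of_nonneg (hz i)]
    exact (htail i hi).1

theorem tailRatio_le_sq (hk : 1 ≤ k) (hn : 0 < n) {z : EuclideanSpace ℝ (Fin n)}
    {K : Finset (Fin n)} (hK : IsTopK k z K) : tailRatio n k K z ≤ n ^ 2 := by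
  obtain ⟨i₀, hi₀⟩ : K.Nonempty := card_pos.mp (hK.1 ▸ hk)
  have hnum : atomNormSigma n k (coordRestrict z Kᶜ) ≤ n * |z i₀| := by
    refine (atomNormSigma_le_sum_abs hk hn _).trans ?_
    simpa using sum_le_card_nsmul univ _ _ fun i _ => show |coordRestrict z Kᶜ i| ≤ |z i₀| by
      by_cases hi : i ∈ K
      · simp [hi]
      · simpa [hi] using hK.2 i₀ hi₀ i hi
  have hden : z i₀ ^ 2 ≤ ‖coordRestrict z K‖ ^ 2 :=
    norm_coordRestrict_sq z K ▸ single_le_sum (fun i _ => sq_nonneg (z i)) hi₀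
  refine div_le_of_le_mul₀ (sq_nonneg _) (sq_nonneg _) ?_
  calc atomNormSigma n k (coordRestrict z Kᶜ) ^ 2
      ≤ (n * |z i₀|) ^ 2 := pow_le_pow_left₀ (gauge_nonneg _) hnum 2
    _ = n ^ 2 * z i₀ ^ 2 := by rw [mul_pow, sq_abs]
    _ ≤ n ^ 2 * ‖coordRestrict z K‖ ^ 2 := by gcongr

end TailRatio

section Descent

variable {n k : ℕ}

theorem mem_descentConeSet_of_wNorm_le {w : Fin n → ℝ} {H : Finset (Fin n)} (hH : H.card ≤ k)
    {z : EuclideanSpace ℝ (Fin n)}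
    (hz : wNorm w (coordRestrict z Hᶜ) ≤ wNorm w (coordRestrict z H)) :
    z ∈ descentConeSet (wNorm w) (sparseVecs n k) := by
  refine Set.mem_biUnion (x := -coordRestrict z H) ⟨H, hH, fun i hi => by simp [hi]⟩ ?_
  have hsum : -coordRestrict z H + z = coordRestrict z Hᶜ := by
    ext i
    by_cases hi : i ∈ H <;> simp [hi]
  have hneg : wNorm w (-coordRestrict z H) = wNorm w (coordRestrict z H) := by
    simp only [wNorm, PiLp.neg_apply, abs_neg]
  change wNorm w (-coordRestrict z H + z) ≤ wNorm w (-coordRestrict z H)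
  rwa [hsum, hneg]

theorem exists_card_eq_weighted_sum_le_of_mem_descentConeSet {w : Fin n → ℝ} (hw : ∀ i, 0 ≤ w i)
    (hkn : k ≤ n) {z : EuclideanSpace ℝ (Fin n)}
    (hz : z ∈ descentConeSet (wNorm w) (sparseVecs n k)) :
    ∃ S : Finset (Fin n), S.card = k ∧ ∑ i ∈ Sᶜ, w i * |z i| ≤ ∑ i ∈ S, w i * |z i| := by
  obtain ⟨x, ⟨s, hs, hx⟩, hdesc⟩ := Set.mem_iUnion₂.mp hz
  have hdesc : wNorm w (x + z) ≤ wNorm w x := hdesc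
  have hxz : wNorm w (x + z) = ∑ i ∈ s, w i * |x i + z i| + ∑ i ∈ sᶜ, w i * |z i| := by
    rw [wNorm, ← sum_add_sum_compl s]
    exact congrArg₂ _ rfl (sum_congr rfl fun i hi => by simp [hx i (mem_compl.mp hi)])
  have hx' : wNorm w x = ∑ i ∈ s, w i * |x i| := by
    rw [wNorm, ← sum_add_sum_compl s, add_eq_left]
    exact sum_eq_zero fun i hi => by simp [hx i (mem_compl.mp hi)]
  have htri : ∑ i ∈ s, w i * |x i| ≤ ∑ i ∈ s, w i * |x i + z i| + ∑ i ∈ s, w i * |z i| := by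
    rw [← sum_add_distrib]
    refine sum_le_sum fun i _ => ?_
    rw [← mul_add]
    exact mul_le_mul_of_nonneg_left (by simpa using abs_sub (x i + z i) (z i)) (hw i)
  have hnonneg : ∀ i, 0 ≤ w i * |z i| := fun i => mul_nonneg (hw i) (abs_nonneg _)
  obtain ⟨S, hsS, hS⟩ := exists_superset_card_eq hs (by simpa using hkn)
  refine ⟨S, hS, ?_⟩
  calc ∑ i ∈ Sᶜ, w i * |z i|
      ≤ ∑ i ∈ sᶜ, w i * |z i| :=
        sum_le_sum_of_subset_of_nonneg (compl_subset_compl.mpr hsS) fun i _ _ => hnonneg i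
    _ ≤ ∑ i ∈ s, w i * |z i| := by linarith
    _ ≤ ∑ i ∈ S, w i * |z i| := sum_le_sum_of_subset_of_nonneg hsS fun i _ _ => hnonneg i

end Descent

section Balancing

theorem exists_mem_Icc_weighted_sum_eq {ι : Type*} {w a : ι → ℝ} {H G : Finset ι}
    (hw : ∑ i ∈ H, w i < ∑ i ∈ G, w i) (ha : ∑ i ∈ G, w i * a i ≤ ∑ i ∈ H, w i * a i)
    {m : ℝ} (hm : 0 < m) : ∃ t ∈ Set.Icc (0 : ℝ) 1,
      ∑ i ∈ H, w i * ((1 - t) * a i + t * m) = ∑ i ∈ G, w i * ((1 - t) * a i + t * m) := by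
  set f : ℝ → ℝ := fun t =>
    ∑ i ∈ H, w i * ((1 - t) * a i + t * m) - ∑ i ∈ G, w i * ((1 - t) * a i + t * m)
  have h0 : 0 ≤ f 0 := by simp [f, ha]
  have h1 : f 1 < 0 := by
    simp only [f, sub_self, zero_mul, one_mul, zero_add, ← sum_mul]
    nlinarith
  obtain ⟨t, ht, hft⟩ :=
    intermediate_value_Icc' zero_le_one (by fun_prop : Continuous f).continuousOn ⟨h1.le, h0⟩
  exact ⟨t, ht, sub_eq_zero.mp hft⟩

variable {n k : ℕ}

theorem exists_balanced_tailRatio_ge_of_nonneg (hk : 1 ≤ k) (hn : 0 < n) {w : Fin n → ℝ}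
    {H₀ : Finset (Fin n)} (hw : ∑ i ∈ H₀, w i < ∑ i ∈ H₀ᶜ, w i) {y : EuclideanSpace ℝ (Fin n)}
    (hy : ∀ i, 0 ≤ y i) {K : Finset (Fin n)} (hK : IsTopK k y K)
    (hmass : ∑ i ∈ H₀ᶜ, w i * y i ≤ ∑ i ∈ H₀, w i * y i) :
    tailRatio n k K y = 0 ∨ ∃ z : EuclideanSpace ℝ (Fin n), z ≠ 0 ∧
      wNorm w (coordRestrict z H₀) = wNorm w (coordRestrict z H₀ᶜ) ∧ IsTopK k z K ∧
      tailRatio n k K y ≤ tailRatio n k K z := by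
  obtain ⟨i₀, hi₀, hmin⟩ := K.exists_min_image y (card_pos.mp (hK.1 ▸ hk))
  set m := y i₀
  have hbelow : ∀ j ∉ K, y j ≤ m := fun j hj => by
    simpa [abs_of_nonneg (hy _)] using hK.2 i₀ hi₀ j hj
  rcases (hy i₀).eq_or_lt with hm | hm
  · left
    have htail : coordRestrict y Kᶜ = 0 := by
      ext j
      by_cases hj : j ∈ K
      · simp [hj]
      · simpa [hj] using le_antisymm (hm ▸ hbelow j hj) (hy j)
    simp [tailRatio, htail, atomNormSigma_eq_gauge]
  right
  obtain ⟨t, ⟨ht₀, ht₁⟩, hbal⟩ := exists_mem_Icc_weighted_sum_eq hw hmass hm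
  set z : EuclideanSpace ℝ (Fin n) := WithLp.toLp 2 fun i => (1 - t) * y i + t * m
  have hzK : ∀ i ∈ K, m ≤ z i ∧ z i ≤ y i := fun i hi => by
    have := hmin i hi
    constructor <;> simp only [z] <;> nlinarith
  have hzKc : ∀ i ∉ K, y i ≤ z i ∧ z i ≤ m := fun i hi => by
    have := hbelow i hi
    constructor <;> simp only [z] <;> nlinarith
  have hz : ∀ i, 0 ≤ z i := fun i => by
    by_cases hi : i ∈ K
    · exact hm.le.trans (hzK i hi).1
    · exact (hy i).trans (hzKc i hi).1
  refine ⟨z, fun h => ?_, ?_, ⟨hK.1, fun i hi j hj => ?_⟩,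
    tailRatio_le_of_squeeze hk hn hm ⟨i₀, hi₀⟩ hy hzK hzKc⟩
  · simpa [h] using hm.trans_le (hzK i₀ hi₀).1
  · simpa only [wNorm_coordRestrict, abs_of_nonneg (hz _)] using hbal
  · rw [abs_of_nonneg (hz i), abs_of_nonneg (hz j)]
    exact (hzKc j hj).2.trans (hzK i hi).1

theorem exists_balanced_tailRatio_ge (hk : 1 ≤ k) {w : Fin n → ℝ} (hw₀ : ∀ i, 0 ≤ w i)
    {T : EuclideanSpace ℝ (Fin n) → Finset (Fin n)}
    (hT : ∀ z : EuclideanSpace ℝ (Fin n), IsTopK k z (T z))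
    {H₀ : Finset (Fin n)} (hH₀card : H₀.card = k) (hH₀ : ∀ i ∈ H₀, ∀ j ∉ H₀, w j ≤ w i)
    (hw : ∑ i ∈ H₀, w i < ∑ i ∈ H₀ᶜ, w i) {z : EuclideanSpace ℝ (Fin n)}
    (hz : z ∈ descentConeSet (wNorm w) (sparseVecs n k)) :
    tailRatio n k (T z) z = 0 ∨ ∃ z' : EuclideanSpace ℝ (Fin n), z' ≠ 0 ∧
      wNorm w (coordRestrict z' H₀) = wNorm w (coordRestrict z' H₀ᶜ) ∧
      tailRatio n k (T z) z ≤ tailRatio n k (T z') z' := by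
  have hkn : k ≤ n := hH₀card ▸ (card_le_univ H₀).trans_eq (Fintype.card_fin n)
  have hn : 0 < n := hk.trans hkn
  obtain ⟨S, hS, hSmass⟩ := exists_card_eq_weighted_sum_le_of_mem_descentConeSet hw₀ hkn hz
  obtain ⟨τ, hτ⟩ := exists_perm_weighted_sum_le w (fun i => |z i|) (fun i => abs_nonneg _) hH₀
    (hS.trans hH₀card.symm) hSmass
  set y : EuclideanSpace ℝ (Fin n) := WithLp.toLp 2 fun i => |z (τ i)|
  have hzy : tailRatio n k (T z) z = tailRatio n k (T y) y :=
    tailRatio_eq_of_isTopK hk hn (hT z) (hT y) τ fun i => (abs_abs _).symm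
  rw [hzy]
  refine (exists_balanced_tailRatio_ge_of_nonneg hk hn hw (fun i => abs_nonneg (z (τ i))) (hT y)
    hτ).imp_right fun ⟨z', hz', hbal, hK, hle⟩ => ⟨z', hz', hbal, ?_⟩
  rwa [← tailRatio_eq_of_isTopK hk hn hK (hT z') 1 fun _ => rfl]

end Balancing

theorem Dsigma_eq_sup_over_H0_eq_general
    (n k : ℕ) (hk : 1 ≤ k)
    (w : Fin n → ℝ) (hpos : ∀ i, 0 < w i)
    (T : EuclideanSpace ℝ (Fin n) → Finset (Fin n))
    (hT : ∀ z, (T z).card = k ∧ ∀ i ∈ T z, ∀ j ∉ T z, |z j| ≤ |z i|)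
    (H₀ : Finset (Fin n)) (hH₀card : H₀.card = k)
    (hH₀ : ∀ i ∈ H₀, ∀ j ∉ H₀, w j ≤ w i)
    (hw : ∑ i ∈ H₀, w i < ∑ i ∈ H₀ᶜ, w i) :
    sSup {r : ℝ | ∃ z ∈ descentConeSet (wNorm w) (sparseVecs n k) \ {0},
        r = (atomNormSigma n k (coordRestrict z (T z)ᶜ)) ^ 2 / ‖coordRestrict z (T z)‖ ^ 2}
      = sSup {r : ℝ | ∃ z : EuclideanSpace ℝ (Fin n), z ≠ 0 ∧
          wNorm w (coordRestrict z H₀) = wNorm w (coordRestrict z H₀ᶜ) ∧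
          r = (atomNormSigma n k (coordRestrict z (T z)ᶜ)) ^ 2 / ‖coordRestrict z (T z)‖ ^ 2} := by
  have hn : 0 < n := hk.trans (hH₀card ▸ (card_le_univ H₀).trans_eq (Fintype.card_fin n))
  have hbdd : ∀ z, tailRatio n k (T z) z ≤ n ^ 2 := fun z => tailRatio_le_sq hk hn (hT z)
  apply le_antisymm
  · refine Real.sSup_le ?_ (Real.sSup_nonneg ?_)
    · rintro _ ⟨z, ⟨hz, -⟩, rfl⟩
      rcases exists_balanced_tailRatio_ge hk (fun i => (hpos i).le) hT hH₀card hH₀ hw hz with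
        h0 | ⟨z', hz', hbal, hle⟩
      · exact h0.trans_le <| Real.sSup_nonneg <| by
          rintro _ ⟨z, -, -, rfl⟩
          exact tailRatio_nonneg _ _
      · exact hle.trans <| le_csSup ⟨n ^ 2, by rintro _ ⟨z, -, -, rfl⟩; exact hbdd z⟩
          ⟨z', hz', hbal, rfl⟩
    · rintro _ ⟨z, -, -, rfl⟩
      exact tailRatio_nonneg _ _
  · refine Real.sSup_le ?_ (Real.sSup_nonneg ?_)
    · rintro _ ⟨z, hz, hbal, rfl⟩
      exact le_csSup ⟨n ^ 2, by rintro _ ⟨z, -, rfl⟩; exact hbdd z⟩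
        ⟨z, ⟨mem_descentConeSet_of_wNorm_le hH₀card.le hbal.ge, hz⟩, rfl⟩
    · rintro _ ⟨z, -, rfl⟩
      exact tailRatio_nonneg _ _

/-- Lemma 10 of the paper, under `‖w_{H₀}‖₁ < ‖w_{H₀ᶜ}‖₁` the supremum defining
`D_Σ(R)` is attained on the set where the weighted masses on `H₀` and `H₀ᶜ` are equal. -/
theorem Dsigma_eq_sup_over_H0_eq
    (n k : ℕ) (hk : 1 ≤ k) (hn : 2 * k ≤ n)
    (w : Fin n → ℝ) (hpos : ∀ i, 0 < w i) (hle : ∀ i, w i ≤ 1) (hmax : ∃ i, w i = 1)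
    (T : EuclideanSpace ℝ (Fin n) → Finset (Fin n))
    (hT : ∀ z, (T z).card = k ∧ ∀ i ∈ T z, ∀ j ∉ T z, |z j| ≤ |z i|)
    (H₀ : Finset (Fin n)) (hH₀card : H₀.card = k)
    (hH₀ : ∀ i ∈ H₀, ∀ j ∉ H₀, w j ≤ w i)
    (hw : ∑ i ∈ H₀, w i < ∑ i ∈ H₀ᶜ, w i) :
    sSup {r : ℝ | ∃ z ∈ descentConeSet (wNorm w) (sparseVecs n k) \ {0},
        r = (atomNormSigma n k (coordRestrict z (T z)ᶜ)) ^ 2 / ‖coordRestrict z (T z)‖ ^ 2}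
      = sSup {r : ℝ | ∃ z : EuclideanSpace ℝ (Fin n), z ≠ 0 ∧
          wNorm w (coordRestrict z H₀) = wNorm w (coordRestrict z H₀ᶜ) ∧
          r = (atomNormSigma n k (coordRestrict z (T z)ᶜ)) ^ 2 / ‖coordRestrict z (T z)‖ ^ 2} :=
  Dsigma_eq_sup_over_H0_eq_general n k hk w hpos T hT H₀ hH₀card hH₀ hw

end
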